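/- arXiv:2504.08867 — 4 statements merged into one kernel-verified Lean document; each statement's English description precedes it below -/
import Mathlib

section
/- Let 0 < a₁ < a₂ < ... < a_N be real numbers and λ₁ < λ₂ < ... < λ_N be real numbers. Then the generalized Vandermonde matrix M with entries M_{i,j} = a_j^{λ_i} has nonzero determinant. -/
/-!
A vector `c` in the left kernel of the matrix gives a generalized polynomial
`∑ i, c i * x ^ lam i` vanishing at the `N` points `a j`. Dividing by `x ^ lam (N - 1)` and
differentiating kills the top term, and by Rolle's theorem the derivative, again a generalized
polynomial with `N - 1` distinct exponents, vanishes at `N - 1` interlacing positive points.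
Induction on `N` then forces `c = 0`.
-/

open Finset

theorem exists_strictMono_hasDerivAt_eq_zero {n : ℕ} {f f' : ℝ → ℝ} {x : Fin (n + 1) → ℝ}
    (hx : StrictMono x) (hf : ∀ t ∈ Set.Icc (x 0) (x (Fin.last n)), HasDerivAt f (f' t) t)
    (hzero : ∀ j, f (x j) = 0) :
    ∃ y : Fin n → ℝ, StrictMono y ∧ (∀ j, y j ∈ Set.Ioo (x j.castSucc) (x j.succ)) ∧
      ∀ j, f' (y j) = 0 := by
  have hsub : ∀ j : Fin n,
      Set.Icc (x j.castSucc) (x j.succ) ⊆ Set.Icc (x 0) (x (Fin.last n)) := fun j =>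
    Set.Icc_subset_Icc (hx.monotone (Fin.zero_le _)) (hx.monotone (Fin.le_last _))
  have hrolle : ∀ j : Fin n, ∃ t ∈ Set.Ioo (x j.castSucc) (x j.succ), f' t = 0 := fun j =>
    exists_hasDerivAt_eq_zero (hx Fin.castSucc_lt_succ)
      (fun t ht => (hf t (hsub j ht)).continuousAt.continuousWithinAt)
      (by rw [hzero, hzero])
      (fun t ht => hf t (hsub j (Set.Ioo_subset_Icc_self ht)))
  choose y hy hy0 using hrolle
  refine ⟨y, fun j j' hjj' => ?_, hy, hy0⟩
  calc y j < x j.succ := (hy j).2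
    _ ≤ x j'.castSucc := hx.monotone (Fin.succ_le_castSucc_iff.mpr hjj')
    _ < y j' := (hy j').1

theorem hasDerivAt_sum_mul_rpow {n : ℕ} (c μ : Fin n → ℝ) {x : ℝ} (hx : 0 < x) :
    HasDerivAt (fun t => ∑ i, c i * t ^ μ i) (∑ i, c i * μ i * x ^ (μ i - 1)) x := by
  refine HasDerivAt.fun_sum fun i _ => ?_
  simpa only [mul_assoc] using
    (Real.hasDerivAt_rpow_const (p := μ i) (Or.inl hx.ne')).const_mul (c i)

theorem sum_mul_rpow_sub {n : ℕ} (c μ : Fin n → ℝ) (ν : ℝ) {x : ℝ} (hx : 0 < x) :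
    ∑ i, c i * x ^ (μ i - ν) = (∑ i, c i * x ^ μ i) / x ^ ν := by
  simp only [Real.rpow_sub hx, mul_div_assoc, sum_div]

theorem eq_zero_of_sum_mul_rpow_eq_zero {n : ℕ} {c lam r : Fin n → ℝ} (hr : StrictMono r)
    (hr_pos : ∀ j, 0 < r j) (hlam : Function.Injective lam)
    (hzero : ∀ j, ∑ i, c i * r j ^ lam i = 0) : c = 0 := by
  induction n with
  | zero => exact Subsingleton.elim _ _
  | succ n ih =>
    set L := lam (Fin.last n)
    have hlam_sub : ∀ i : Fin n, lam i.castSucc - L ≠ 0 := fun i h =>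
      (Fin.castSucc_lt_last i).ne (hlam (sub_eq_zero.mp h))
    obtain ⟨s, hs_mono, hs_mem, hs_zero⟩ :=
      exists_strictMono_hasDerivAt_eq_zero hr
        (fun t ht => hasDerivAt_sum_mul_rpow c (lam · - L) (hr_pos 0 |>.trans_le ht.1))
        (fun j => by rw [sum_mul_rpow_sub _ _ _ (hr_pos j), hzero j, zero_div])
    have hc_castSucc : ∀ i : Fin n, c i.castSucc = 0 := by
      have hderiv_zero : ∀ j : Fin n, ∑ i : Fin n, c i.castSucc * (lam i.castSucc - L) *
          s j ^ (lam i.castSucc - L - 1) = 0 := fun j => by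
        simpa [Fin.sum_univ_castSucc, L] using hs_zero j
      have := ih hs_mono (fun j => (hr_pos _).trans (hs_mem j).1)
        (fun i j hij => Fin.castSucc_injective n (hlam (by linarith [hij])))
        (lam := fun i => lam i.castSucc - L - 1) hderiv_zero
      exact fun i => (mul_eq_zero.mp (congrFun this i)).resolve_right (hlam_sub i)
    have hc_last : c (Fin.last n) = 0 := by
      have h := hzero (Fin.last n)
      simp only [Fin.sum_univ_castSucc, hc_castSucc, zero_mul, sum_const_zero, zero_add] at h
      exact (mul_eq_zero.mp h).resolve_right (Real.rpow_pos_of_pos (hr_pos _) _).ne'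
    funext i
    exact Fin.lastCases hc_last hc_castSucc i

theorem generalized_vandermonde_det_ne_zero (N : ℕ) (a lam : Fin N → ℝ)
    (ha_pos : ∀ i, 0 < a i) (ha : StrictMono a) (hlam : StrictMono lam) :
    (Matrix.of fun i j : Fin N => a j ^ lam i).det ≠ 0 := by
  intro hdet
  obtain ⟨c, hc, hker⟩ := Matrix.exists_vecMul_eq_zero_iff.mpr hdet
  exact hc <| eq_zero_of_sum_mul_rpow_eq_zero ha ha_pos hlam.injective (congrFun hker)
end

section
/- Let 0 < a₁ < ... < a_N be positive reals, λ₁ < ... < λ_N reals, and c₁,...,c_N reals such that for every k, ∑_{i=1}^N c_i · a_k^{λ_i} = 0. Then c_i = 0 for all i. -/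
/-!
Induction on `N`. Dividing `f(x) = ∑ cᵢ x^{λᵢ}` by `x^{λ₁}` keeps its zeros `a₁ < ⋯ < a_N`, and
the derivative of the quotient is again of the form `∑ᵢ cᵢ' x^{λᵢ'}`, now with only the `N - 1`
terms `i ≥ 2`, where `cᵢ' = cᵢ (λᵢ - λ₁)`. By Rolle it vanishes at `N - 1` interlaced points, so
all `cᵢ (λᵢ - λ₁)` vanish by induction, hence `cᵢ = 0` for `i ≥ 2`, and then `c₁ = 0` too.
-/

open Set Finset Function

lemma sum_mul_rpow_sub_eq_zero {ι : Type*} (s : Finset ι) (c lam : ι → ℝ) (μ : ℝ) {x : ℝ}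
    (hx : 0 < x) (h : ∑ i ∈ s, c i * x ^ lam i = 0) :
    ∑ i ∈ s, c i * x ^ (lam i - μ) = 0 := by
  simp_rw [Real.rpow_sub hx, mul_div_assoc', ← Finset.sum_div, h, zero_div]

lemma hasDerivAt_sum_mul_rpow_s3 {ι : Type*} (s : Finset ι) (c lam : ι → ℝ) {x : ℝ} (hx : x ≠ 0) :
    HasDerivAt (fun y ↦ ∑ i ∈ s, c i * y ^ lam i)
      (∑ i ∈ s, c i * (lam i * x ^ (lam i - 1))) x :=
  HasDerivAt.fun_sum fun i _ ↦ (Real.hasDerivAt_rpow_const (Or.inl hx)).const_mul (c i)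

lemma exists_strictMono_deriv_eq_zero_interlacing {N : ℕ} {f f' : ℝ → ℝ}
    {a : Fin (N + 1) → ℝ} (ha : StrictMono a)
    (hf : ∀ x ∈ Icc (a 0) (a (Fin.last N)), HasDerivAt f (f' x) x) (hzero : ∀ k, f (a k) = 0) :
    ∃ b : Fin N → ℝ, StrictMono b ∧ (∀ k, b k ∈ Ioo (a k.castSucc) (a k.succ)) ∧
      ∀ k, f' (b k) = 0 := by
  have hf' : ∀ k : Fin N, ∀ x ∈ Icc (a k.castSucc) (a k.succ), HasDerivAt f (f' x) x :=
    fun k x hx ↦ hf x ⟨(ha.monotone (Fin.zero_le _)).trans hx.1,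
      hx.2.trans (ha.monotone (Fin.le_last _))⟩
  have hrolle : ∀ k : Fin N, ∃ b ∈ Ioo (a k.castSucc) (a k.succ), f' b = 0 := fun k ↦
    exists_hasDerivAt_eq_zero (ha Fin.castSucc_lt_succ)
      (fun x hx ↦ (hf' k x hx).continuousAt.continuousWithinAt) (by rw [hzero, hzero])
      (fun x hx ↦ hf' k x (Ioo_subset_Icc_self hx))
  choose b hb_mem hb_zero using hrolle
  refine ⟨b, fun k l hkl ↦ ?_, hb_mem, hb_zero⟩
  calc b k < a k.succ := (hb_mem k).2
    _ ≤ a l.castSucc := ha.monotone (Fin.succ_le_castSucc_iff.mpr hkl)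
    _ < b l := (hb_mem l).1

theorem eq_zero_of_forall_sum_mul_rpow_eq_zero {N : ℕ} {a lam c : Fin N → ℝ}
    (ha_pos : ∀ k, 0 < a k) (ha : StrictMono a) (hlam : Injective lam)
    (h : ∀ k, ∑ i, c i * a k ^ lam i = 0) : c = 0 := by
  induction N with
  | zero => exact Subsingleton.elim _ _
  | succ N ih =>
    have hlam_ne (i : Fin N) : lam i.succ - lam 0 ≠ 0 :=
      sub_ne_zero.mpr (hlam.ne (Fin.succ_ne_zero i))
    obtain ⟨b, hb_mono, hb_mem, hb_zero⟩ :=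
      exists_strictMono_deriv_eq_zero_interlacing ha
        (fun x hx ↦ hasDerivAt_sum_mul_rpow_s3 univ c (fun i ↦ lam i - lam 0)
          ((ha_pos 0).trans_le hx.1).ne')
        (fun k ↦ sum_mul_rpow_sub_eq_zero univ c lam (lam 0) (ha_pos k) (h k))
    have hderiv_zero (k : Fin N) :
        ∑ i : Fin N, c i.succ * (lam i.succ - lam 0) * b k ^ (lam i.succ - lam 0 - 1) = 0 := by
      have := hb_zero k
      simp only [Fin.sum_univ_succ, sub_self, zero_mul, mul_zero, zero_add] at this
      simpa only [mul_assoc] using this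
    have hc_succ : ∀ i : Fin N, c i.succ = 0 := by
      have := ih (fun k ↦ (ha_pos _).trans (hb_mem k).1) hb_mono
        (fun i j hij ↦ Fin.succ_injective _ (hlam (by simpa using hij))) hderiv_zero
      exact fun i ↦ (mul_eq_zero.mp (congrFun this i)).resolve_right (hlam_ne i)
    have hc_zero : c 0 = 0 := by
      have := h 0
      simp only [Fin.sum_univ_succ, hc_succ, zero_mul, Finset.sum_const_zero, add_zero] at this
      exact (mul_eq_zero.mp this).resolve_right (Real.rpow_pos_of_pos (ha_pos 0) _).ne'
    ext i
    exact Fin.cases hc_zero hc_succ i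

theorem generalized_vandermonde_rows_indep (N : ℕ) (a lam c : Fin N → ℝ)
    (ha_pos : ∀ i, 0 < a i) (ha : StrictMono a) (hlam : StrictMono lam)
    (h : ∀ k, ∑ i, c i * a k ^ lam i = 0) :
    ∀ i, c i = 0 :=
  congrFun (eq_zero_of_forall_sum_mul_rpow_eq_zero ha_pos ha hlam.injective h)
end

section
/- Let W ⊆ ℝ^d, U ⊆ ℝ^{d+d'} measurable with d'-dimensional Hausdorff measure H_{d'}(U) = 0, and let (g(w))_{w∈W} be an ℝ^{d'}-valued stochastic process. Suppose there are constants C, ρ > 0 such that for each (w,v) ∈ U with w ∈ W, the law of g(w) restricted to the ball B(v,ρ) is absolutely continuous with density bounded by C. If g is almost surely Lipschitz continuous (with random Lipschitz constant), then P(∃ w ∈ W : (w, g(w)) ∈ U) = 0. -/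
/-!
Fix a Lipschitz bound `L`. The probability that the graph of `g` over `W` meets a set `A` is an
outer measure in `A`. If `A` has small diameter `δ` and contains a point `p = (w₀, v) ∈ U` with
`w₀ ∈ W`, then on such an event `g w₀` lies within `(L + 1) δ` of `v`, so the density bound makes
the event have probability at most `C (2 (L + 1) δ)^{d'}`. An outer measure dominated by
`diam^{d'}` on small sets is dominated by a multiple of `μH[d']`, hence vanishes on `U`.
Taking the union over integer Lipschitz bounds finishes the proof.
-/

open MeasureTheory
open scoped ENNReal NNReal

namespace MeasureTheory.OuterMeasure

variable {α X : Type*}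

noncomputable def hitting (μ : OuterMeasure α) (Γ : α → Set X) : OuterMeasure X :=
  map Prod.snd (restrict {p | p.2 ∈ Γ p.1} (comap Prod.fst μ))

theorem hitting_apply (μ : OuterMeasure α) (Γ : α → Set X) (s : Set X) :
    hitting μ Γ s = μ {a | (Γ a ∩ s).Nonempty} := by
  simp only [hitting, map_apply, restrict_apply, comap_apply]
  congr 1
  ext a
  simp [Set.Nonempty, and_comm]

theorem apply_le_mul_hausdorffMeasure [EMetricSpace X] [MeasurableSpace X] [BorelSpace X]
    (μ : OuterMeasure X) {K r : ℝ≥0∞} {d : ℝ} (hK₀ : K ≠ 0) (hK : K ≠ ∞) (hr : 0 < r)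
    (h : ∀ s, Metric.ediam s ≤ r → μ s ≤ K * Metric.ediam s ^ d) (s : Set X) :
    μ s ≤ K * μH[d] s := by
  have := le_mkMetric (K • fun t : ℝ≥0∞ => t ^ d) μ r hr h
  rw [mkMetric_smul _ hK hK₀] at this
  simpa [Measure.hausdorffMeasure, coe_mkMetric] using this s

end MeasureTheory.OuterMeasure

theorem Real.volume_pi_closedEBall {ι : Type*} [Fintype ι] (a : ι → ℝ) {r : ℝ≥0∞}
    (hr : r ≠ ∞) :
    volume (Metric.closedEBall a r) = (2 * r) ^ Fintype.card ι := by
  rw [← ENNReal.ofReal_toReal hr, Metric.closedEBall_ofReal ENNReal.toReal_nonneg,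
    Real.volume_pi_closedBall _ ENNReal.toReal_nonneg, ENNReal.ofReal_pow (by positivity),
    ENNReal.ofReal_mul zero_le_two, ENNReal.ofReal_ofNat]

theorem LipschitzOnWith.edist_le_mul_ediam {α β : Type*} [PseudoEMetricSpace α]
    [PseudoEMetricSpace β] {f : α → β} {L : ℝ≥0} {W : Set α} (hf : LipschitzOnWith L f W)
    {s : Set (α × β)} {p : α × β} {w : α} (hp : p ∈ s) (hpW : p.1 ∈ W) (hw : w ∈ W)
    (hws : (w, f w) ∈ s) : edist (f p.1) p.2 ≤ (L + 1) * Metric.ediam s := by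
  have hdist := Metric.edist_le_ediam_of_mem hws hp
  rw [Prod.edist_eq, max_le_iff] at hdist
  calc edist (f p.1) p.2 ≤ edist (f p.1) (f w) + edist (f w) p.2 := edist_triangle _ _ _
    _ ≤ L * edist p.1 w + Metric.ediam s := add_le_add (hf hpW hw) hdist.2
    _ ≤ L * Metric.ediam s + Metric.ediam s := by
        gcongr; rw [edist_comm]; exact hdist.1
    _ = (L + 1) * Metric.ediam s := by ring

section RandomGraph

variable {Ω E ι : Type*} [MeasurableSpace Ω] [Fintype ι]

theorem measure_mem_closedEBall_le {P : Measure Ω} {X : Ω → ι → ℝ} {v : ι → ℝ} {C ρ : ℝ}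
    (hdens : ∀ s, MeasurableSet s → s ⊆ Metric.ball v ρ →
      P {ω | X ω ∈ s} ≤ ENNReal.ofReal C * volume s)
    {R : ℝ≥0∞} (hR : R < ENNReal.ofReal ρ) :
    P {ω | X ω ∈ Metric.closedEBall v R} ≤ ENNReal.ofReal C * (2 * R) ^ Fintype.card ι := by
  have hball : Metric.closedEBall v R ⊆ Metric.ball v ρ := fun x hx => by
    rw [← Metric.eball_ofReal]
    exact lt_of_le_of_lt hx hR
  rw [← Real.volume_pi_closedEBall v (hR.trans ENNReal.ofReal_lt_top).ne]
  exact hdens _ Metric.isClosed_closedEBall.measurableSet hball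

noncomputable def lipschitzGraphHitting [PseudoEMetricSpace E] (P : Measure Ω)
    (g : E → Ω → ι → ℝ) (W : Set E) (L : ℝ≥0) : OuterMeasure (E × (ι → ℝ)) :=
  OuterMeasure.hitting (OuterMeasure.restrict {ω | LipschitzOnWith L (fun w => g w ω) W}
    P.toOuterMeasure) fun ω => (fun w => (w, g w ω)) '' W

theorem lipschitzGraphHitting_apply [PseudoEMetricSpace E] {P : Measure Ω}
    (g : E → Ω → ι → ℝ) (W : Set E) (L : ℝ≥0) (s : Set (E × (ι → ℝ))) :
    lipschitzGraphHitting P g W L s =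
      P {ω | LipschitzOnWith L (fun w => g w ω) W ∧ ∃ w ∈ W, (w, g w ω) ∈ s} := by
  rw [lipschitzGraphHitting, OuterMeasure.hitting_apply, OuterMeasure.restrict_apply,
    Measure.coe_toOuterMeasure]
  congr 1
  ext ω
  simp [Set.Nonempty, and_comm]

variable {P : Measure Ω} {g : E → Ω → ι → ℝ} {W : Set E} {U : Set (E × (ι → ℝ))} {C ρ : ℝ}

theorem lipschitzGraphHitting_restrict_le [PseudoEMetricSpace E] (L : ℝ≥0)
    (hdens : ∀ w v, (w, v) ∈ U → w ∈ W →
      ∀ s : Set (ι → ℝ), MeasurableSet s → s ⊆ Metric.ball v ρ →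
        P {ω : Ω | g w ω ∈ s} ≤ ENNReal.ofReal C * volume s)
    {s : Set (E × (ι → ℝ))} (hs : (L + 1) * Metric.ediam s < ENNReal.ofReal ρ) :
    OuterMeasure.restrict U (lipschitzGraphHitting P g W L) s ≤
      ENNReal.ofReal C * (2 * (L + 1)) ^ Fintype.card ι *
        Metric.ediam s ^ (Fintype.card ι : ℝ) := by
  rw [OuterMeasure.restrict_apply, lipschitzGraphHitting_apply]
  by_cases hhit : ∃ p ∈ s ∩ U, p.1 ∈ W
  · obtain ⟨p, ⟨hps, hpU⟩, hpW⟩ := hhit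
    calc P {ω | LipschitzOnWith L (fun w => g w ω) W ∧ ∃ w ∈ W, (w, g w ω) ∈ s ∩ U}
        ≤ P {ω | g p.1 ω ∈ Metric.closedEBall p.2 ((L + 1) * Metric.ediam s)} :=
          measure_mono fun ω ⟨hL, w, hw, hws, _⟩ => hL.edist_le_mul_ediam hps hpW hw hws
      _ ≤ ENNReal.ofReal C * (2 * ((L + 1) * Metric.ediam s)) ^ Fintype.card ι :=
          measure_mem_closedEBall_le (hdens p.1 p.2 hpU hpW) hs
      _ = _ := by rw [ENNReal.rpow_natCast, ← mul_assoc, mul_pow, mul_assoc]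
  · refine (measure_mono_null (t := ∅) (fun ω hω => ?_) measure_empty).trans_le zero_le
    obtain ⟨-, w, hw, hws⟩ := hω
    exact hhit ⟨_, hws, hw⟩

theorem measure_lipschitz_graph_hits_eq_zero [EMetricSpace E] [MeasurableSpace E]
    [BorelSpace E] (L : ℝ≥0) (hC : 0 < C) (hρ : 0 < ρ)
    (hdens : ∀ w v, (w, v) ∈ U → w ∈ W →
      ∀ s : Set (ι → ℝ), MeasurableSet s → s ⊆ Metric.ball v ρ →
        P {ω : Ω | g w ω ∈ s} ≤ ENNReal.ofReal C * volume s)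
    (hU : μH[(Fintype.card ι : ℝ)] U = 0) :
    P {ω | LipschitzOnWith L (fun w => g w ω) W ∧ ∃ w ∈ W, (w, g w ω) ∈ U} = 0 := by
  obtain ⟨r, hr, hrρ⟩ := ENNReal.exists_pos_mul_lt (a := (L : ℝ≥0∞) + 1) (by simp)
    (ENNReal.ofReal_pos.2 hρ).ne'
  have hK₀ : ENNReal.ofReal C * (2 * (L + 1)) ^ Fintype.card ι ≠ 0 := by simp [hC]
  have hK : ENNReal.ofReal C * (2 * (L + 1)) ^ Fintype.card ι ≠ ∞ := by finiteness
  have hsmall : ∀ s : Set (E × (ι → ℝ)), Metric.ediam s ≤ r →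
      (L + 1) * Metric.ediam s < ENNReal.ofReal ρ := fun s hs =>
    calc (L + 1) * Metric.ediam s ≤ r * (L + 1) := by rw [mul_comm]; gcongr
      _ < ENNReal.ofReal ρ := hrρ
  have := (OuterMeasure.restrict U (lipschitzGraphHitting P g W L)).apply_le_mul_hausdorffMeasure
    hK₀ hK hr (fun s hs => lipschitzGraphHitting_restrict_le L hdens (hsmall s hs)) U
  rwa [hU, mul_zero, OuterMeasure.restrict_apply, Set.inter_self, lipschitzGraphHitting_apply,
    nonpos_iff_eq_zero] at this

end RandomGraph

theorem graph_avoids_thin_set_general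
    {Ω : Type*} [MeasureSpace Ω] (P : Measure Ω)
    (d d' : ℕ) (W : Set (Fin d → ℝ)) (U : Set ((Fin d → ℝ) × (Fin d' → ℝ)))
    (g : (Fin d → ℝ) → Ω → (Fin d' → ℝ))
    (C ρ : ℝ) (hC : 0 < C) (hρ : 0 < ρ)
    (hdens : ∀ w v, (w, v) ∈ U → w ∈ W →
      ∀ s : Set (Fin d' → ℝ), MeasurableSet s → s ⊆ Metric.ball v ρ →
        P {ω : Ω | g w ω ∈ s} ≤ ENNReal.ofReal C * volume s)
    (hLip : ∀ᵐ ω ∂P, ∃ L : ℝ≥0, LipschitzOnWith L (fun w => g w ω) W)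
    (hHaus : μH[(d' : ℝ)] U = 0) :
    P {ω : Ω | ∃ w ∈ W, (w, g w ω) ∈ U} = 0 := by
  have hnull (n : ℕ) :
      P {ω | LipschitzOnWith n (fun w => g w ω) W ∧ ∃ w ∈ W, (w, g w ω) ∈ U} = 0 :=
    measure_lipschitz_graph_hits_eq_zero n hC hρ hdens (by rwa [Fintype.card_fin])
  refine measure_mono_null (fun ω hω => ?_) (measure_union_null hLip (measure_iUnion_null hnull))
  by_cases hω : ∃ L : ℝ≥0, LipschitzOnWith L (fun w => g w ω) W
  · obtain ⟨L, hL⟩ := hω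
    exact Or.inr (Set.mem_iUnion.2 ⟨⌈L⌉₊, hL.weaken (Nat.le_ceil L), hω⟩)
  · exact Or.inl hω

theorem graph_avoids_thin_set
    {Ω : Type*} [MeasureSpace Ω] (P : Measure Ω) [IsProbabilityMeasure P]
    (d d' : ℕ) (W : Set (Fin d → ℝ)) (U : Set ((Fin d → ℝ) × (Fin d' → ℝ)))
    (hW : MeasurableSet W) (hU : MeasurableSet U)
    (g : (Fin d → ℝ) → Ω → (Fin d' → ℝ))
    (hmeas : ∀ w, Measurable (g w))
    (C ρ : ℝ) (hC : 0 < C) (hρ : 0 < ρ)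
    (hdens : ∀ w v, (w, v) ∈ U → w ∈ W →
      ∀ s : Set (Fin d' → ℝ), MeasurableSet s → s ⊆ Metric.ball v ρ →
        P {ω : Ω | g w ω ∈ s} ≤ ENNReal.ofReal C * volume s)
    (hLip : ∀ᵐ ω ∂P, ∃ L : ℝ≥0, LipschitzOnWith L (fun w => g w ω) W)
    (hHaus : μH[(d' : ℝ)] U = 0) :
    P {ω : Ω | ∃ w ∈ W, (w, g w ω) ∈ U} = 0 :=
  graph_avoids_thin_set_general P d d' W U g C ρ hC hρ hdens hLip hHaus
end

section
/- Let J : ℝ^n → ℝ be twice continuously differentiable, θ₀ ∈ ℝ^n, δ > 0 and ρ > 0 such that (i) ‖∇J(θ₀)‖ < (δ/2)·ρ and (ii) the Hessian ∇²J(θ) ⪰ ρ·I for all θ in the open ball B(θ₀, δ). Then J has a local minimum in B(θ₀, δ). -/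
/-!
Restricted to the segment from `θ₀` to a point `θ` at distance `r`, Taylor's formula with
Lagrange remainder and the Hessian bound give `J θ ≥ J θ₀ - ‖∇J θ₀‖ r + ρ r² / 2`, which exceeds
`J θ₀` as soon as `2 ‖∇J θ₀‖ / ρ < r`. For such an `r < δ`, the minimum of `J` on the compact ball
of radius `r` is not attained on its boundary sphere, so it is an interior local minimum.
-/

open Set Metric

variable {E F : Type*} [NormedAddCommGroup E] [NormedSpace ℝ E]
  [NormedAddCommGroup F] [NormedSpace ℝ F]

theorem deriv_comp_add_smul {f : E → F} (hf : Differentiable ℝ f) (x v : E) :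
    deriv (fun t : ℝ => f (x + t • v)) = fun t => fderiv ℝ f (x + t • v) v := by
  funext t
  have hline : HasDerivAt (fun t : ℝ => x + t • v) v t := by
    simpa using ((hasDerivAt_id t).smul_const v).const_add x
  exact ((hf _).hasFDerivAt.comp_hasDerivAt t hline).deriv

theorem iteratedDeriv_two_comp_add_smul {f : E → F} (hf : ContDiff ℝ 2 f) (x v : E) (t : ℝ) :
    iteratedDeriv 2 (fun t : ℝ => f (x + t • v)) t = iteratedFDeriv ℝ 2 f (x + t • v) ![v, v] := by
  have hf' : Differentiable ℝ (fderiv ℝ f) :=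
    (hf.fderiv_right (m := 1) le_rfl).differentiable one_ne_zero
  have happly : Differentiable ℝ fun z => fderiv ℝ f z v := fun z => (hf' z).clm_apply
    (differentiableAt_const v)
  rw [iteratedDeriv_succ, iteratedDeriv_one, deriv_comp_add_smul (hf.differentiable two_ne_zero),
    deriv_comp_add_smul happly, iteratedFDeriv_two_apply]
  simp [fderiv_clm_apply (hf' _) (differentiableAt_const v)]

theorem add_deriv_add_half_le_of_le_iteratedDeriv_two {g : ℝ → ℝ} (hg : ContDiff ℝ 2 g) {c : ℝ}
    (hc : ∀ t ∈ Icc (0 : ℝ) 1, c ≤ iteratedDeriv 2 g t) :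
    g 0 + deriv g 0 + c / 2 ≤ g 1 := by
  obtain ⟨t, ht, htaylor⟩ :=
    taylor_mean_remainder_lagrange_iteratedDeriv (n := 1) zero_ne_one hg.contDiffOn
  rw [uIoo_of_le zero_le_one] at ht
  rw [uIcc_of_le zero_le_one, taylorWithinEval_succ, taylor_within_zero_eval,
    iteratedDerivWithin_eq_iteratedDeriv (uniqueDiffOn_Icc zero_lt_one)
      (hg.contDiffAt.of_le (by norm_num)) (left_mem_Icc.2 zero_le_one), iteratedDeriv_one] at htaylor
  have := hc t (Ioo_subset_Icc_self ht)
  norm_num [Nat.factorial] at htaylor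
  linarith

theorem ContDiff.add_fderiv_add_half_le_of_le_iteratedFDeriv_two {f : E → ℝ}
    (hf : ContDiff ℝ 2 f) (x v : E) {c : ℝ}
    (hc : ∀ t ∈ Icc (0 : ℝ) 1, c ≤ iteratedFDeriv ℝ 2 f (x + t • v) ![v, v]) :
    f x + fderiv ℝ f x v + c / 2 ≤ f (x + v) := by
  have hline : ContDiff ℝ 2 fun t : ℝ => f (x + t • v) := hf.comp (by fun_prop)
  have := add_deriv_add_half_le_of_le_iteratedDeriv_two hline (c := c) fun t ht => by
    rw [iteratedDeriv_two_comp_add_smul hf]; exact hc t ht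
  simpa [deriv_comp_add_smul (hf.differentiable two_ne_zero)] using this

theorem ContDiff.lt_of_mem_sphere_of_norm_fderiv_lt {f : E → ℝ} (hf : ContDiff ℝ 2 f) {x y : E} {r ρ : ℝ}
    (hhess : ∀ z ∈ closedBall x r, ∀ v : E, ρ * ‖v‖ ^ 2 ≤ iteratedFDeriv ℝ 2 f z ![v, v])
    (hgrad : 2 * ‖fderiv ℝ f x‖ < ρ * r) (hy : y ∈ sphere x r) :
    f x < f y := by
  rw [mem_sphere_iff_norm] at hy
  have hsegment : ∀ t ∈ Icc (0 : ℝ) 1, x + t • (y - x) ∈ closedBall x r := fun t ht => by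
    rw [mem_closedBall_iff_norm, add_sub_cancel_left, norm_smul, Real.norm_of_nonneg ht.1, hy]
    exact mul_le_of_le_one_left (hy ▸ norm_nonneg _) ht.2
  have hquadratic := hf.add_fderiv_add_half_le_of_le_iteratedFDeriv_two x (y - x)
    fun t ht => hhess _ (hsegment t ht) (y - x)
  have hlinear : -(‖fderiv ℝ f x‖ * r) ≤ fderiv ℝ f x (y - x) := by
    have := (fderiv ℝ f x).le_opNorm (y - x)
    rw [hy] at this
    exact neg_le_of_abs_le ((Real.norm_eq_abs _).symm.trans_le this)
  have hr : 0 < r := by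
    refine (hy ▸ norm_nonneg _ : 0 ≤ r).lt_of_ne ?_
    rintro rfl
    linarith [norm_nonneg (fderiv ℝ f x)]
  rw [add_sub_cancel, hy] at hquadratic
  nlinarith

theorem local_min_exists_of_gradient_small_hessian_positive_general
    (n : ℕ) (J : EuclideanSpace ℝ (Fin n) → ℝ) (hJ : ContDiff ℝ 2 J)
    (θ₀ : EuclideanSpace ℝ (Fin n)) (δ ρ : ℝ) (hρ : 0 < ρ)
    (hgrad : ‖gradient J θ₀‖ < δ / 2 * ρ)
    (hhess : ∀ θ ∈ Metric.ball θ₀ δ, ∀ v : EuclideanSpace ℝ (Fin n),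
      (iteratedFDeriv ℝ 2 J θ) ![v, v] ≥ ρ * ‖v‖ ^ 2) :
    ∃ θs ∈ Metric.ball θ₀ δ, IsLocalMin J θs := by
  have hnorm : ‖fderiv ℝ J θ₀‖ = ‖gradient J θ₀‖ := by
    rw [← toDual_gradient, LinearIsometryEquiv.norm_map]
  obtain ⟨r, har, hrδ⟩ : ∃ r, 2 * ‖gradient J θ₀‖ / ρ < r ∧ r < δ :=
    exists_between (by rw [div_lt_iff₀ hρ]; linarith)
  have hr : 0 ≤ r := (by positivity : (0 : ℝ) ≤ 2 * ‖gradient J θ₀‖ / ρ).trans har.le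
  have hsphere : ∀ y ∈ sphere θ₀ r, J θ₀ < J y := fun y hy =>
    hJ.lt_of_mem_sphere_of_norm_fderiv_lt
      (fun z hz => hhess z (closedBall_subset_ball hrδ hz))
      (by rwa [hnorm, ← div_lt_iff₀' hρ]) hy
  obtain ⟨θs, hθs, hmin⟩ :=
    exists_isLocalMin_mem_ball hJ.continuous.continuousOn (mem_closedBall_self hr) hsphere
  exact ⟨θs, ball_subset_ball hrδ.le hθs, hmin⟩

theorem local_min_exists_of_gradient_small_hessian_positive
    (n : ℕ) (J : EuclideanSpace ℝ (Fin n) → ℝ) (hJ : ContDiff ℝ 2 J)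
    (θ₀ : EuclideanSpace ℝ (Fin n)) (δ ρ : ℝ) (hδ : 0 < δ) (hρ : 0 < ρ)
    (hgrad : ‖gradient J θ₀‖ < δ / 2 * ρ)
    (hhess : ∀ θ ∈ Metric.ball θ₀ δ, ∀ v : EuclideanSpace ℝ (Fin n),
      (iteratedFDeriv ℝ 2 J θ) ![v, v] ≥ ρ * ‖v‖ ^ 2) :
    ∃ θs ∈ Metric.ball θ₀ δ, IsLocalMin J θs :=
  local_min_exists_of_gradient_small_hessian_positive_general n J hJ θ₀ δ ρ hρ hgrad hhess
end
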